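/- Let f : [−1;2] → ℝ² be continuous with modulus of uniform continuity md, let I = [a_I;b_I] ⊆ [−1;2] be a closed interval, and let p = ((s₀,x₀),…,(s_k,x_k)) be an n-approximation of f|_I. Then for all 0 ≤ i < k, ‖xᵢ − xᵢ₊₁‖ < 3·2⁻ⁿ, and for all s ∈ [a_I;b_I], ‖f(s) − h_p(s)‖ < 5·2⁻ⁿ. -/

import Mathlib

/-!
Consecutive sample times of an `n`-approximation are less than `2^(-md n)` apart, so `f` moves
less than `2^(-n)` between them; with the two vertex errors this gives `‖xᵢ - xᵢ₊₁‖ < 3·2^(-n)`.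
For `s` in `[sⱼ, sⱼ₊₁]` the point `h_p(s)` lies on the segment `[xⱼ, xⱼ₊₁]`, hence within
`‖xⱼ - xⱼ₊₁‖` of `xⱼ`, while `‖f(s) - xⱼ‖ < 2·2^(-n)`.
-/

noncomputable section

abbrev Plane := EuclideanSpace ℝ (Fin 2)

def pt (a b : ℝ) : Plane := WithLp.toLp 2 ![a, b]

def unitSquare : Set Plane := {z | z 0 ∈ Set.Icc (0:ℝ) 1 ∧ z 1 ∈ Set.Icc (0:ℝ) 1}

structure Track where
  k : ℕ
  s : ℕ → ℝ
  x : ℕ → Plane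
  mono : ∀ i < k, s i < s (i + 1)
  ne : ∀ i < k, x i ≠ x (i + 1)

def Track.seg (p : Track) (t : ℝ) : ℕ := sSup {i | i < p.k ∧ p.s i ≤ t}

def Track.path (p : Track) (t : ℝ) : Plane :=
  p.x (p.seg t) + ((t - p.s (p.seg t)) / (p.s (p.seg t + 1) - p.s (p.seg t))) •
    (p.x (p.seg t + 1) - p.x (p.seg t))

def Track.rangeSet (p : Track) : Set Plane := p.path '' Set.Icc (p.s 0) (p.s p.k)

def Track.V (p : Track) : Set Plane := {z | ∃ i ≤ p.k, z = p.x i}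

def line (x y : Plane) : Set Plane := (affineSpan ℝ {x, y} : Set Plane)

def Track.L (p : Track) : Set Plane := {z | ∃ i < p.k, z ∈ line (p.x i) (p.x (i + 1))}

def Track.Lbar (p : Track) : Set Plane :=
  {z | ∃ i ≤ p.k, ∃ j ≤ p.k, p.x i ≠ p.x j ∧ z ∈ line (p.x i) (p.x j)}

def IsSegSet (S : Set Plane) : Prop := ∃ x y : Plane, x ≠ y ∧ S = segment ℝ x y

def NoCommonSegment (p q : Track) : Prop :=
  ¬ ∃ S : Set Plane, IsSegSet S ∧ S ⊆ p.rangeSet ∧ S ⊆ q.rangeSet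

def WSep (p q : Track) : Prop := p.V ∩ q.L = ∅ ∧ q.V ∩ p.L = ∅

def IsInter (p q : Track) (s t : ℝ) : Prop :=
  p.s 0 < s ∧ s < p.s p.k ∧ q.s 0 < t ∧ t < q.s q.k ∧ p.path s = q.path t

def Admissible (p q : Track) (x : Plane) (δ : ℝ) : Prop :=
  0 < δ ∧ ∀ v ∈ p.V ∪ q.V, v ∈ Metric.ball x δ → v = x

def entryParam (p : Track) (s δ : ℝ) (x : Plane) : ℝ :=
  sInf {s' | s' < s ∧ p.path '' Set.Icc s' s ⊆ Metric.ball x δ}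

def exitParam (p : Track) (s δ : ℝ) (x : Plane) : ℝ :=
  sSup {s' | s < s' ∧ p.path '' Set.Icc s s' ⊆ Metric.ball x δ}

def Alternates (x : Plane) (δ : ℝ) (a b c d : Plane) : Prop :=
  c ∈ Metric.sphere x δ \ {a, b} ∧ d ∈ Metric.sphere x δ \ {a, b} ∧
  connectedComponentIn (Metric.sphere x δ \ {a, b}) c ≠
    connectedComponentIn (Metric.sphere x δ \ {a, b}) d

def CrossAt (p q : Track) (s t δ : ℝ) : Prop :=
  Alternates (p.path s) δ
    (p.path (entryParam p s δ (p.path s))) (p.path (exitParam p s δ (p.path s)))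
    (q.path (entryParam q t δ (p.path s))) (q.path (exitParam q t δ (p.path s)))

def IsCrossing (p q : Track) (s t : ℝ) : Prop :=
  IsInter p q s t ∧ ∃ δ : ℝ, Admissible p q (p.path s) δ ∧ CrossAt p q s t δ

def CN (p q : Track) : ℕ := {st : ℝ × ℝ | IsCrossing p q st.1 st.2}.ncard

def par (p q : Track) : ℕ := CN p q % 2

def ds (A B : Set Plane) : ℝ := sInf {r | ∃ a ∈ A, ∃ b ∈ B, r = ‖a - b‖}

def alphaIJ (f g : ℝ → Plane) (aI bI aJ bJ : ℝ) : ℝ :=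
  min (ds {f aI, f bI} (g '' Set.Icc aJ bJ)) (ds {g aJ, g bJ} (f '' Set.Icc aI bI))

def IsModulus2 (f g : ℝ → Plane) (md : ℕ → ℕ) : Prop :=
  Monotone md ∧ ∀ n : ℕ, ∀ t ∈ Set.Icc (-1:ℝ) 2, ∀ t' ∈ Set.Icc (-1:ℝ) 2,
    |t - t'| < (2:ℝ) ^ (-(md n : ℤ)) →
    ‖f t - f t'‖ < (2:ℝ) ^ (-(n : ℤ)) ∧ ‖g t - g t'‖ < (2:ℝ) ^ (-(n : ℤ))

def IsApprox (f : ℝ → Plane) (md : ℕ → ℕ) (a b : ℝ) (n : ℕ) (p : Track) : Prop :=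
  p.s 0 = a ∧ p.s p.k = b ∧
  (∀ i < p.k, p.s (i + 1) - p.s i < (2:ℝ) ^ (-(md n : ℤ))) ∧
  (∀ i ≤ p.k, ‖f (p.s i) - p.x i‖ < (2:ℝ) ^ (-(n : ℤ)))

def ParityIs (f g : ℝ → Plane) (md : ℕ → ℕ) (aI bI aJ bJ : ℝ) (b : ℕ) : Prop :=
  ∀ n : ℕ, (2:ℝ) ^ (-(n : ℤ)) < alphaIJ f g aI bI aJ bJ / 16 →
    ∀ p q : Track, IsApprox f md aI bI n p → IsApprox g md aJ bJ n q → WSep p q →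
      par p q = b

def IsModulus1 (f : ℝ → Plane) (md : ℕ → ℕ) : Prop :=
  Monotone md ∧ ∀ n : ℕ, ∀ t ∈ Set.Icc (-1:ℝ) 2, ∀ t' ∈ Set.Icc (-1:ℝ) 2,
    |t - t'| < (2:ℝ) ^ (-(md n : ℤ)) → ‖f t - f t'‖ < (2:ℝ) ^ (-(n : ℤ))

def nbhdU (A : Set Plane) (δ : ℝ) : Set Plane := {x | ∃ y ∈ A, ‖x - y‖ < δ}

def extF (φ : ℝ → Plane) (t : ℝ) : Plane :=
  if t ≤ 0 then pt t 0 else if t ≤ 1 then φ t else pt t 1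

def extG (ψ : ℝ → Plane) (t : ℝ) : Plane :=
  if t ≤ 0 then pt t 1 else if t ≤ 1 then ψ t else pt t 0

open Set AffineMap

theorem norm_sub_lineMap_le {E : Type*} [NormedAddCommGroup E] [NormedSpace ℝ E]
    (y a b : E) {θ : ℝ} (hθ : θ ∈ Icc (0 : ℝ) 1) :
    ‖y - lineMap a b θ‖ ≤ ‖y - a‖ + ‖a - b‖ := by
  have hseg : dist a (lineMap a b θ) ≤ dist a b := by
    rw [dist_left_lineMap, Real.norm_of_nonneg hθ.1]
    exact mul_le_of_le_one_left dist_nonneg hθ.2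
  calc ‖y - lineMap a b θ‖ ≤ ‖y - a‖ + ‖a - lineMap a b θ‖ := norm_sub_le_norm_sub_add_norm_sub ..
    _ ≤ ‖y - a‖ + ‖a - b‖ := by simpa only [dist_eq_norm, add_le_add_iff_left] using hseg

namespace Track

variable (p : Track)

theorem s_le_s {i j : ℕ} (hij : i ≤ j) (hj : j ≤ p.k) : p.s i ≤ p.s j := by
  induction j, hij using Nat.le_induction with
  | base => rfl
  | succ j _ ih => exact (ih (by omega)).trans (p.mono j (by omega)).le

theorem path_eq_lineMap (t : ℝ) :
    p.path t = lineMap (p.x (p.seg t)) (p.x (p.seg t + 1))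
      ((t - p.s (p.seg t)) / (p.s (p.seg t + 1) - p.s (p.seg t))) := by
  rw [path, lineMap_apply, vsub_eq_sub, vadd_eq_add, add_comm]

theorem seg_of_k_eq_zero (hk : p.k = 0) (t : ℝ) : p.seg t = 0 := by
  simp [seg, hk]

theorem path_s_zero_of_k_eq_zero (hk : p.k = 0) : p.path (p.s 0) = p.x 0 := by
  rw [path_eq_lineMap, p.seg_of_k_eq_zero hk, sub_self, zero_div, lineMap_apply_zero]

variable {p} {t : ℝ}

theorem seg_lt_and_s_seg_le (hk : 0 < p.k) (ht : p.s 0 ≤ t) :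
    p.seg t < p.k ∧ p.s (p.seg t) ≤ t :=
  Nat.sSup_mem (s := {i | i < p.k ∧ p.s i ≤ t}) ⟨0, hk, ht⟩ ⟨p.k, fun _ hi => hi.1.le⟩

theorem seg_lt_and_mem_Icc (hk : 0 < p.k) (ht : t ∈ Icc (p.s 0) (p.s p.k)) :
    p.seg t < p.k ∧ t ∈ Icc (p.s (p.seg t)) (p.s (p.seg t + 1)) := by
  obtain ⟨hlt, hle⟩ := seg_lt_and_s_seg_le hk ht.1
  refine ⟨hlt, hle, ?_⟩
  by_contra! hgt
  rcases (show p.seg t + 1 = p.k ∨ p.seg t + 1 < p.k by omega) with hsucc | hsucc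
  · exact hgt.not_ge (hsucc ▸ ht.2)
  · have : p.seg t + 1 ≤ p.seg t := le_csSup ⟨p.k, fun _ hi => hi.1.le⟩ ⟨hsucc, hgt.le⟩
    omega

end Track

namespace IsApprox

variable {f : ℝ → Plane} {md : ℕ → ℕ} {a b : ℝ} {n : ℕ} {p : Track}

theorem s_mem_Icc (hp : IsApprox f md a b n p) {i : ℕ} (hi : i ≤ p.k) : p.s i ∈ Icc a b :=
  ⟨hp.1 ▸ p.s_le_s (Nat.zero_le i) hi, hp.2.1 ▸ p.s_le_s hi le_rfl⟩

variable (hmd : IsModulus1 f md) (hI : Icc a b ⊆ Icc (-1 : ℝ) 2)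
include hmd hI

theorem norm_sub_apply_s_lt (hp : IsApprox f md a b n p) {i : ℕ} (hi : i < p.k) {t : ℝ}
    (ht : t ∈ Icc (p.s i) (p.s (i + 1))) (hta : t ∈ Icc a b) :
    ‖f t - f (p.s i)‖ < (2 : ℝ) ^ (-(n : ℤ)) := by
  refine hmd.2 n t (hI hta) _ (hI (hp.s_mem_Icc hi.le)) ?_
  rw [abs_of_nonneg (sub_nonneg.2 ht.1)]
  linarith [ht.2, hp.2.2.1 i hi]

theorem norm_x_sub_x_succ_lt (hp : IsApprox f md a b n p) {i : ℕ} (hi : i < p.k) :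
    ‖p.x i - p.x (i + 1)‖ < 3 * (2 : ℝ) ^ (-(n : ℤ)) := by
  have hf := norm_sub_apply_s_lt hmd hI hp hi ⟨(p.mono i hi).le, le_rfl⟩ (hp.s_mem_Icc hi)
  have hx₀ := hp.2.2.2 i hi.le
  have hx₁ := hp.2.2.2 (i + 1) hi
  calc ‖p.x i - p.x (i + 1)‖
      ≤ ‖p.x i - f (p.s i)‖ + ‖f (p.s i) - f (p.s (i + 1))‖ + ‖f (p.s (i + 1)) - p.x (i + 1)‖ := by
        simpa only [dist_eq_norm] using dist_triangle4 _ (f (p.s i)) (f (p.s (i + 1))) _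
    _ < 3 * (2 : ℝ) ^ (-(n : ℤ)) := by
        rw [norm_sub_rev (p.x i), norm_sub_rev (f (p.s i)) (f (p.s (i + 1)))]
        linarith

theorem norm_sub_path_lt (hp : IsApprox f md a b n p) {t : ℝ} (ht : t ∈ Icc a b) :
    ‖f t - p.path t‖ < 5 * (2 : ℝ) ^ (-(n : ℤ)) := by
  have hε : (0 : ℝ) < (2 : ℝ) ^ (-(n : ℤ)) := by positivity
  rcases Nat.eq_zero_or_pos p.k with hk | hk
  · have ht₀ : t = p.s 0 := by
      have hs_k := hp.2.1
      rw [hk] at hs_k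
      linarith [ht.1, ht.2, hp.1]
    rw [ht₀, p.path_s_zero_of_k_eq_zero hk]
    linarith [hp.2.2.2 0 (Nat.zero_le _)]
  · obtain ⟨hj, htj⟩ := Track.seg_lt_and_mem_Icc hk (hp.1 ▸ hp.2.1 ▸ ht)
    set j := p.seg t
    have hθ : (t - p.s j) / (p.s (j + 1) - p.s j) ∈ Icc (0 : ℝ) 1 :=
      ⟨div_nonneg (by linarith [htj.1]) (by linarith [p.mono j hj]),
        div_le_one_of_le₀ (by linarith [htj.2]) (by linarith [p.mono j hj])⟩
    calc ‖f t - p.path t‖ ≤ ‖f t - p.x j‖ + ‖p.x j - p.x (j + 1)‖ :=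
          p.path_eq_lineMap t ▸ norm_sub_lineMap_le _ _ _ hθ
      _ ≤ ‖f t - f (p.s j)‖ + ‖f (p.s j) - p.x j‖ + ‖p.x j - p.x (j + 1)‖ := by
          gcongr
          exact norm_sub_le_norm_sub_add_norm_sub ..
      _ < 5 * (2 : ℝ) ^ (-(n : ℤ)) := by
          linarith [norm_sub_apply_s_lt hmd hI hp hj htj ht, hp.2.2.2 j hj.le,
            norm_x_sub_x_succ_lt hmd hI hp hj]

end IsApprox

theorem approximation_estimates_general (f : ℝ → Plane) (md : ℕ → ℕ)
    (hmd : IsModulus1 f md)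
    (aI bI : ℝ) (hI : Set.Icc aI bI ⊆ Set.Icc (-1:ℝ) 2)
    (n : ℕ) (p : Track) (hp : IsApprox f md aI bI n p) :
    (∀ i < p.k, ‖p.x i - p.x (i + 1)‖ < 3 * (2:ℝ) ^ (-(n : ℤ))) ∧
    (∀ s ∈ Set.Icc aI bI, ‖f s - p.path s‖ < 5 * (2:ℝ) ^ (-(n : ℤ))) :=
  ⟨fun _ hi => hp.norm_x_sub_x_succ_lt hmd hI hi, fun _ hs => hp.norm_sub_path_lt hmd hI hs⟩

theorem approximation_estimates (f : ℝ → Plane) (md : ℕ → ℕ)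
    (hf : ContinuousOn f (Set.Icc (-1:ℝ) 2)) (hmd : IsModulus1 f md)
    (aI bI : ℝ) (hIab : aI ≤ bI) (hI : Set.Icc aI bI ⊆ Set.Icc (-1:ℝ) 2)
    (n : ℕ) (p : Track) (hp : IsApprox f md aI bI n p) :
    (∀ i < p.k, ‖p.x i - p.x (i + 1)‖ < 3 * (2:ℝ) ^ (-(n : ℤ))) ∧
    (∀ s ∈ Set.Icc aI bI, ‖f s - p.path s‖ < 5 * (2:ℝ) ^ (-(n : ℤ))) :=
  approximation_estimates_general f md hmd aI bI hI n p hp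

end
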